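/- arXiv:2012.06568 — 7 statements merged into one kernel-verified Lean document; each statement's English description precedes it below -/
import Mathlib

section
/- Let X be a nonempty compact metric space, p_data a Borel probability measure on X, and D : X → ℝ a continuous function with 0 < D(x) < 1 for all x. Writing α = max_{x∈X} D(x), one has ∫ log D(x) dp_data(x) + log(1−α) ≤ log α + log(1−α) ≤ −log 4. Consequently, the infimum over Borel probability measures p of U(D,p) = ∫ log D dp_data + ∫ log(1−D) dp is at most −log 4. -/
open MeasureTheory

/-- With `α = max_X D`, one has
`∫ log D dp_data + log (1-α) ≤ log α + log (1-α) ≤ -log 4`; consequently the infimum over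
Borel probability measures `p` of `U(D,p) = ∫ log D dp_data + ∫ log (1-D) dp` is at most
`-log 4`. -/
theorem stmt_4 {X : Type*} [MetricSpace X] [CompactSpace X] [Nonempty X]
    [MeasurableSpace X] [BorelSpace X]
    (pdata : Measure X) [IsProbabilityMeasure pdata]
    (D : X → ℝ) (hD : Continuous D) (hD01 : ∀ x, 0 < D x ∧ D x < 1) :
    (∫ x, Real.log (D x) ∂pdata + Real.log (1 - ⨆ x, D x) ≤
        Real.log (⨆ x, D x) + Real.log (1 - ⨆ x, D x)) ∧
      Real.log (⨆ x, D x) + Real.log (1 - ⨆ x, D x) ≤ -Real.log 4 ∧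
      (⨅ p : ProbabilityMeasure X,
          (∫ x, Real.log (D x) ∂pdata +
            ∫ x, Real.log (1 - D x) ∂(p : Measure X))) ≤ -Real.log 4 := by
  obtain ⟨x₀, hx₀'⟩ := hD.exists_forall_ge (by simp [Filter.cocompact_eq_bot])
  have hα : (⨆ x, D x) = D x₀ :=
    le_antisymm (ciSup_le hx₀') (le_ciSup ⟨D x₀, fun y ⟨x, hx⟩ => hx ▸ hx₀' x⟩ x₀)
  have h0 : 0 < D x₀ := (hD01 x₀).1
  have h1 : D x₀ < 1 := (hD01 x₀).2
  have hlogD : Continuous fun x => Real.log (D x) :=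
    hD.log fun x => (hD01 x).1.ne'
  have hlog1D : Continuous fun x => Real.log (1 - D x) :=
    (continuous_const.sub hD).log fun x => (sub_pos.mpr (hD01 x).2).ne'
  -- part 1
  have hint : Integrable (fun x => Real.log (D x)) pdata := (integrableOn_univ.mp (hlogD.continuousOn.integrableOn_compact isCompact_univ))
  have part1 : ∫ x, Real.log (D x) ∂pdata ≤ Real.log (⨆ x, D x) := by
    rw [hα]
    calc ∫ x, Real.log (D x) ∂pdata ≤ ∫ _x, Real.log (D x₀) ∂pdata :=
          integral_mono hint (integrable_const _) fun x =>
            Real.log_le_log (hD01 x).1 (hx₀' x)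
      _ = Real.log (D x₀) := by simp
  refine ⟨by linarith, ?_, ?_⟩
  · -- part 2
    rw [hα, ← Real.log_mul h0.ne' (sub_pos.mpr h1).ne']
    have h4 : D x₀ * (1 - D x₀) ≤ 1 / 4 := by nlinarith [sq_nonneg (D x₀ - 1/2)]
    calc Real.log (D x₀ * (1 - D x₀)) ≤ Real.log (1 / 4) :=
          Real.log_le_log (by nlinarith) h4
      _ = -Real.log 4 := by
          rw [one_div, Real.log_inv]
  · -- part 3
    have key : ∀ p : ProbabilityMeasure X,
        Real.log (1 - D x₀) ≤ ∫ x, Real.log (1 - D x) ∂(p : Measure X) := by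
      intro p
      calc Real.log (1 - D x₀) = ∫ _x, Real.log (1 - D x₀) ∂(p : Measure X) := by simp
        _ ≤ ∫ x, Real.log (1 - D x) ∂(p : Measure X) :=
            integral_mono (integrable_const _) (integrableOn_univ.mp (hlog1D.continuousOn.integrableOn_compact isCompact_univ)) fun x =>
              Real.log_le_log (sub_pos.mpr h1) (by linarith [hx₀' x])
    have hbdd : BddBelow (Set.range fun p : ProbabilityMeasure X =>
        ∫ x, Real.log (D x) ∂pdata + ∫ x, Real.log (1 - D x) ∂(p : Measure X)) := by
      refine ⟨∫ x, Real.log (D x) ∂pdata + Real.log (1 - D x₀), ?_⟩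
      rintro y ⟨p, rfl⟩
      exact add_le_add_right (key p) _
    apply ciInf_le_of_le hbdd ⟨Measure.dirac x₀, inferInstance⟩
    show ∫ x, Real.log (D x) ∂pdata + ∫ x, Real.log (1 - D x) ∂(Measure.dirac x₀) ≤ -Real.log 4
    rw [integral_dirac (fun x => Real.log (1 - D x)) x₀]
    calc ∫ x, Real.log (D x) ∂pdata + Real.log (1 - D x₀)
        ≤ Real.log (⨆ x, D x) + Real.log (1 - D x₀) := by linarith
      _ = Real.log (D x₀ * (1 - D x₀)) := by
          rw [hα, Real.log_mul h0.ne' (sub_pos.mpr h1).ne']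
      _ ≤ Real.log (1 / 4) := Real.log_le_log (by nlinarith) (by nlinarith [sq_nonneg (D x₀ - 1/2)])
      _ = -Real.log 4 := by rw [one_div, Real.log_inv]
end

section
/- Let X be a nonempty compact metric space and p_data a Borel probability measure on X. Then the supremum, over all continuous functions D : X → ℝ with 0 < D(x) < 1 for all x, of the infimum over Borel probability measures p on X of U(D, p) = ∫ log D dp_data + ∫ log(1−D) dp, equals −log 4, and this supremum is attained (for instance by the constant function D ≡ 1/2). -/
open MeasureTheory

lemma log4_aux : Real.log 4 = Real.log 2 + Real.log 2 := by
  rw [show (4:ℝ) = 2 * 2 by norm_num, Real.log_mul (by norm_num) (by norm_num)]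

lemma log_mul_le_aux {M : ℝ} (h0 : 0 < M) (h1 : M < 1) :
    Real.log M + Real.log (1 - M) ≤ -Real.log 4 := by
  rw [← Real.log_mul (ne_of_gt h0) (by linarith)]
  rw [show -Real.log 4 = Real.log (1/4) by
    rw [Real.log_div one_ne_zero (by norm_num)]; simp]
  apply Real.log_le_log (by nlinarith)
  nlinarith [sq_nonneg (M - 1/2)]

/-- The supremum, over continuous `D : X → (0,1)`, of the infimum over Borel probability
measures `p` of `U(D,p) = ∫ log D dp_data + ∫ log (1-D) dp`, equals `-log 4`, and it is
attained (e.g. by the constant function `D ≡ 1/2`). Formalized as: `-log 4` is the greatest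
element of the set of attainable inner-infimum values. -/
theorem stmt_6 {X : Type*} [MetricSpace X] [CompactSpace X] [Nonempty X]
    [MeasurableSpace X] [BorelSpace X]
    (pdata : Measure X) [IsProbabilityMeasure pdata] :
    IsGreatest
      {v : ℝ | ∃ D : X → ℝ, Continuous D ∧ (∀ x, 0 < D x ∧ D x < 1) ∧
        v = ⨅ p : ProbabilityMeasure X,
          (∫ x, Real.log (D x) ∂pdata +
            ∫ x, Real.log (1 - D x) ∂(p : Measure X))}
      (-Real.log 4) := by
  have hne : Nonempty (ProbabilityMeasure X) :=
    ⟨⟨Measure.dirac (Classical.arbitrary X), inferInstance⟩⟩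
  constructor
  · -- membership: D ≡ 1/2
    refine ⟨fun _ => 1/2, continuous_const, fun x => ⟨by norm_num, by norm_num⟩, ?_⟩
    have hval : ∀ p : ProbabilityMeasure X,
        (∫ x, Real.log ((fun _ => (1:ℝ)/2) x) ∂pdata +
          ∫ x, Real.log (1 - (fun _ => (1:ℝ)/2) x) ∂(p : Measure X)) = -Real.log 4 := by
      intro p
      simp only [show (1:ℝ) - 1/2 = 1/2 by norm_num]
      rw [integral_const, integral_const]
      simp only [measure_univ, ENNReal.toReal_one, probReal_univ, one_smul,
        Real.log_div one_ne_zero (by norm_num : (2:ℝ) ≠ 0), Real.log_one, log4_aux]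
      ring
    rw [iInf_congr hval, ciInf_const]
  · -- upper bound
    rintro v ⟨D, hD, hbd, rfl⟩
    obtain ⟨x₀, -, hx₀⟩ := isCompact_univ.exists_isMaxOn Set.univ_nonempty hD.continuousOn
    have hx₀' : ∀ x, D x ≤ D x₀ := fun x => hx₀ (Set.mem_univ x)
    have hM0 := (hbd x₀).1
    have hM1 := (hbd x₀).2
    have hlogD : Continuous fun x => Real.log (D x) :=
      hD.log (fun x => ne_of_gt (hbd x).1)
    have hlog1D : Continuous fun x => Real.log (1 - D x) :=
      (continuous_const.sub hD).log (fun x => ne_of_gt (by simp only [Pi.sub_apply]; linarith [(hbd x).2]))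
    -- integrability
    have hint : ∀ (μ : Measure X) [IsProbabilityMeasure μ] (f : X → ℝ), Continuous f →
        Integrable f μ := fun μ _ f hf =>
      hf.integrable_of_hasCompactSupport (HasCompactSupport.of_compactSpace f)
    -- bound on first integral
    have hA : ∫ x, Real.log (D x) ∂pdata ≤ Real.log (D x₀) := by
      calc ∫ x, Real.log (D x) ∂pdata ≤ ∫ _, Real.log (D x₀) ∂pdata := by
            apply integral_mono (hint pdata _ hlogD) (integrable_const _)
            exact fun x => Real.log_le_log (hbd x).1 (hx₀' x)
        _ = Real.log (D x₀) := by simp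
    -- lower bound for BddBelow
    obtain ⟨m, hm⟩ : ∃ m, ∀ x, m ≤ Real.log (1 - D x) := by
      obtain ⟨x₁, -, hx₁⟩ := isCompact_univ.exists_isMinOn Set.univ_nonempty
        hlog1D.continuousOn
      exact ⟨Real.log (1 - D x₁), fun x => hx₁ (Set.mem_univ x)⟩
    have hbdd : BddBelow (Set.range fun p : ProbabilityMeasure X =>
        (∫ x, Real.log (D x) ∂pdata + ∫ x, Real.log (1 - D x) ∂(p : Measure X))) := by
      refine ⟨∫ x, Real.log (D x) ∂pdata + m, ?_⟩
      rintro _ ⟨p, rfl⟩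
      refine add_le_add_right ?_ _
      calc m = ∫ _, m ∂(p : Measure X) := by simp
        _ ≤ _ := integral_mono (integrable_const _)
              (hint (p : Measure X) _ hlog1D) hm
    -- use Dirac at x₀
    let pδ : ProbabilityMeasure X := ⟨Measure.dirac x₀, inferInstance⟩
    refine le_trans (ciInf_le hbdd pδ) ?_
    have : ∫ x, Real.log (1 - D x) ∂(pδ : Measure X) = Real.log (1 - D x₀) := by
      exact integral_dirac _ x₀
    rw [this]
    calc ∫ x, Real.log (D x) ∂pdata + Real.log (1 - D x₀)
        ≤ Real.log (D x₀) + Real.log (1 - D x₀) := by linarith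
      _ ≤ -Real.log 4 := log_mul_le_aux hM0 hM1
end

section
/- Let X be a nonempty compact metric space, p_data a Borel probability measure on X, and D : X → ℝ a continuous function with 0 < D(x) < 1 for all x. Then the infimum over Borel probability measures p on X of U(D, p) = ∫ log D dp_data + ∫ log(1−D) dp equals −log 4 if and only if D(x) = 1/2 for every x in the (topological) support of p_data and D(x) ≤ 1/2 for every x ∈ X. -/
open MeasureTheory

/-- The topological support of a measure: the set of points all of whose open
neighborhoods have nonzero measure. On a (second-countable) compact metric space this is
the smallest closed set of full measure. -/
def measureSupport {X : Type*} [TopologicalSpace X] [MeasurableSpace X]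
    (μ : Measure X) : Set X :=
  {x | ∀ U : Set X, IsOpen U → x ∈ U → μ U ≠ 0}

section Aux

open Real

lemma aux_log_add_log_le {t : ℝ} (h0 : 0 < t) (h1 : t < 1) :
    Real.log t + Real.log (1 - t) ≤ -Real.log 4 := by
  have h1' : 0 < 1 - t := by linarith
  rw [← Real.log_mul (ne_of_gt h0) (ne_of_gt h1'), ← Real.log_inv]
  have hle : t * (1 - t) ≤ 4⁻¹ := by nlinarith [sq_nonneg (t - 1/2)]
  exact (Real.log_le_log_iff (by positivity) (by norm_num)).mpr hle

lemma aux_log_eq {t : ℝ} (h0 : 0 < t) (h1 : t < 1)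
    (h : Real.log t + Real.log (1 - t) = -Real.log 4) : t = 1 / 2 := by
  have h1' : 0 < 1 - t := by linarith
  have : Real.log (t * (1 - t)) = Real.log 4⁻¹ := by
    rw [Real.log_mul (ne_of_gt h0) (ne_of_gt h1'), Real.log_inv, h]
  have heq : t * (1 - t) = 4⁻¹ :=
    Real.log_injOn_pos (by simp; positivity) (by norm_num) this
  nlinarith [sq_nonneg (t - 1/2)]

lemma aux_integrable {X : Type*} [MetricSpace X] [CompactSpace X]
    [MeasurableSpace X] [BorelSpace X] (μ : Measure X) [IsFiniteMeasure μ]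
    {f : X → ℝ} (hf : Continuous f) : Integrable f μ := by
  have : IntegrableOn f Set.univ μ :=
    hf.continuousOn.integrableOn_compact isCompact_univ
  simpa [IntegrableOn] using this

end Aux

/-- For continuous `D : X → (0,1)` on a nonempty compact metric space, the infimum over
Borel probability measures `p` of `U(D,p) = ∫ log D dp_data + ∫ log (1-D) dp` equals
`-log 4` iff `D = 1/2` on the support of `p_data` and `D ≤ 1/2` everywhere. -/
theorem stmt_7 {X : Type*} [MetricSpace X] [CompactSpace X] [Nonempty X]
    [MeasurableSpace X] [BorelSpace X]
    (pdata : Measure X) [IsProbabilityMeasure pdata]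
    (D : X → ℝ) (hD : Continuous D) (hD01 : ∀ x, 0 < D x ∧ D x < 1) :
    (⨅ p : ProbabilityMeasure X,
        (∫ x, Real.log (D x) ∂pdata +
          ∫ x, Real.log (1 - D x) ∂(p : Measure X))) = -Real.log 4 ↔
      (∀ x ∈ measureSupport pdata, D x = 1 / 2) ∧ ∀ x, D x ≤ 1 / 2 := by
  -- continuity facts
  have hDpos : ∀ x, 0 < D x := fun x => (hD01 x).1
  have hDlt : ∀ x, D x < 1 := fun x => (hD01 x).2
  have hlogD : Continuous fun x => Real.log (D x) :=
    hD.log (fun x => ne_of_gt (hDpos x))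
  have hlog1D : Continuous fun x => Real.log (1 - D x) :=
    (continuous_const.sub hD).log (fun x => ne_of_gt (by show (0:ℝ) < 1 - D x; linarith [hDlt x]))
  -- maximizer of D
  obtain ⟨x₀, -, hx₀⟩ :=
    isCompact_univ.exists_isMaxOn Set.univ_nonempty hD.continuousOn
  have hx₀max : ∀ x, D x ≤ D x₀ := fun x => hx₀ (Set.mem_univ x)
  haveI : Nonempty (ProbabilityMeasure X) :=
    ⟨⟨Measure.dirac (Classical.arbitrary X), inferInstance⟩⟩
  set C : ℝ := ∫ x, Real.log (D x) ∂pdata with hC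
  -- the infimum equals C + log (1 - D x₀)
  have hinf : (⨅ p : ProbabilityMeasure X,
      (∫ x, Real.log (D x) ∂pdata +
        ∫ x, Real.log (1 - D x) ∂(p : Measure X))) = C + Real.log (1 - D x₀) := by
    have hlb : ∀ p : ProbabilityMeasure X,
        C + Real.log (1 - D x₀) ≤
          ∫ x, Real.log (D x) ∂pdata + ∫ x, Real.log (1 - D x) ∂(p : Measure X) := by
      intro p
      have hint : Integrable (fun x => Real.log (1 - D x)) (p : Measure X) :=
        aux_integrable _ hlog1D
      have : Real.log (1 - D x₀) ≤ ∫ x, Real.log (1 - D x) ∂(p : Measure X) := by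
        have h := integral_mono (μ := (p : Measure X))
          (integrable_const (Real.log (1 - D x₀))) hint
          (fun x => Real.log_le_log (x := 1 - D x₀) (y := 1 - D x) (by linarith [hDlt x₀]) (by linarith [hx₀max x]))
        simpa using h
      simp only [hC]; linarith
    have hbdd : BddBelow (Set.range fun p : ProbabilityMeasure X =>
        ∫ x, Real.log (D x) ∂pdata + ∫ x, Real.log (1 - D x) ∂(p : Measure X)) := by
      refine ⟨C + Real.log (1 - D x₀), ?_⟩
      rintro r ⟨p, rfl⟩
      exact hlb p
    apply le_antisymm
    · have := ciInf_le hbdd (⟨Measure.dirac x₀, inferInstance⟩ : ProbabilityMeasure X)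
      simpa [integral_dirac, hC] using this
    · exact le_ciInf hlb
  rw [hinf]
  constructor
  · -- forward direction
    intro heq
    -- pointwise: log (D x) + log (1 - D x₀) ≤ - log 4
    have hptle : ∀ x, Real.log (D x) + Real.log (1 - D x₀) ≤ -Real.log 4 := by
      intro x
      have h1 : Real.log (1 - D x₀) ≤ Real.log (1 - D x) :=
        Real.log_le_log (x := 1 - D x₀) (y := 1 - D x) (by linarith [hDlt x₀])
          (by linarith [hx₀max x])
      have h2 := aux_log_add_log_le (hDpos x) (hDlt x)
      linarith
    -- the nonneg function with zero integral
    set f : X → ℝ := fun x => -Real.log 4 - (Real.log (D x) + Real.log (1 - D x₀))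
      with hf
    have hfc : Continuous f := by
      exact (continuous_const.sub (hlogD.add continuous_const))
    have hfi : Integrable f pdata := aux_integrable _ hfc
    have hfnn : 0 ≤ f := fun x => by simpa [hf] using sub_nonneg.mpr (hptle x)
    have hfint : ∫ x, f x ∂pdata = 0 := by
      have hadd : Integrable (fun x => Real.log (D x) + Real.log (1 - D x₀)) pdata :=
        (aux_integrable _ hlogD).add (integrable_const _)
      have h1 : ∫ x, f x ∂pdata
          = -Real.log 4 - (C + Real.log (1 - D x₀)) := by
        have h2 : ∫ x, f x ∂pdata
            = ∫ _x, (-Real.log 4) ∂pdata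
              - ∫ x, (Real.log (D x) + Real.log (1 - D x₀)) ∂pdata :=
          integral_sub (integrable_const _) hadd
        have h3 : ∫ x, (Real.log (D x) + Real.log (1 - D x₀)) ∂pdata
            = (∫ x, Real.log (D x) ∂pdata) + ∫ _x, Real.log (1 - D x₀) ∂pdata :=
          integral_add (aux_integrable _ hlogD) (integrable_const _)
        rw [h2, h3]
        simp [hC]
      rw [h1, heq]; ring
    have hae : f =ᵐ[pdata] 0 := (integral_eq_zero_iff_of_nonneg hfnn hfi).mp hfint
    -- from f x = 0 we get D x = 1/2 and D x₀ = 1/2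
    have key : ∀ x, f x = 0 → D x = 1 / 2 ∧ D x₀ = 1 / 2 := by
      intro x hx
      have hx0 : -Real.log 4 - (Real.log (D x) + Real.log (1 - D x₀)) = 0 := hx
      have hx' : Real.log (D x) + Real.log (1 - D x₀) = -Real.log 4 := by linarith
      have h1 : Real.log (1 - D x₀) ≤ Real.log (1 - D x) :=
        Real.log_le_log (x := 1 - D x₀) (y := 1 - D x) (by linarith [hDlt x₀])
          (by linarith [hx₀max x])
      have h2 := aux_log_add_log_le (hDpos x) (hDlt x)
      have h3 : Real.log (D x) + Real.log (1 - D x) = -Real.log 4 := by linarith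
      have hDx : D x = 1 / 2 := aux_log_eq (hDpos x) (hDlt x) h3
      have h4 : Real.log (1 - D x₀) = Real.log (1 - D x) := by linarith
      have h5 : (1 : ℝ) - D x₀ = 1 - D x :=
        Real.log_injOn_pos (by simp [Set.mem_Ioi]; linarith [hDlt x₀])
          (by simp [Set.mem_Ioi]; linarith [hDlt x]) h4
      exact ⟨hDx, by linarith⟩
    -- pdata is nonzero, so some point satisfies f = 0, giving D x₀ = 1/2
    have hne : pdata ≠ 0 := IsProbabilityMeasure.ne_zero pdata
    have : ∃ x, f x = 0 := by
      have := (ae_neBot.mpr hne)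
      exact hae.exists
    obtain ⟨z, hz⟩ := this
    have hx₀half : D x₀ = 1 / 2 := (key z hz).2
    refine ⟨?_, fun x => by linarith [hx₀max x, hx₀half]⟩
    -- support condition
    intro x hx
    by_contra hne'
    set U : Set X := {y | D y ≠ 1 / 2} with hU
    have hUopen : IsOpen U := isOpen_ne_fun hD continuous_const
    have hUnull : pdata U = 0 := by
      have hsub : U ⊆ {y | ¬ f y = 0} := by
        intro y hy hfy
        exact hy ((key y hfy).1)
      have : pdata {y | ¬ f y = 0} = 0 := by
        exact ae_iff.mp hae
      exact measure_mono_null hsub this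
    exact hx U hUopen hne' hUnull
  · -- reverse direction
    rintro ⟨hsupp, hle⟩
    -- the complement of the support is null
    have hcompl : pdata (measureSupport pdata)ᶜ = 0 := by
      apply measure_null_of_locally_null
      intro x hx
      simp only [measureSupport, Set.mem_compl_iff, Set.mem_setOf_eq, not_forall] at hx
      obtain ⟨U, hUo, hxU, hU0⟩ := hx
      push_neg at hU0
      exact ⟨U, mem_nhdsWithin_of_mem_nhds (hUo.mem_nhds hxU), hU0⟩
    -- D = 1/2 a.e.
    have haeD : (fun x => Real.log (D x)) =ᵐ[pdata]
        (fun _ => Real.log (1 / 2)) := by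
      have hsub : {x | ¬ Real.log (D x) = Real.log (1/2)} ⊆ (measureSupport pdata)ᶜ := by
        intro y hy hymem
        exact hy (by rw [hsupp y hymem])
      exact measure_mono_null hsub hcompl
    have hCval : C = Real.log (1 / 2) := by
      rw [hC, integral_congr_ae haeD]
      simp
    -- support is nonempty and D x₀ = 1/2
    have hnesupp : (measureSupport pdata).Nonempty := by
      by_contra hempty
      rw [Set.not_nonempty_iff_eq_empty] at hempty
      have : pdata Set.univ = 0 := by
        have := hcompl
        rw [hempty] at this
        simp at this
      simp at this
    obtain ⟨s, hs⟩ := hnesupp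
    have hx₀half : D x₀ = 1 / 2 :=
      le_antisymm (hle x₀) (by rw [← hsupp s hs]; exact hx₀max s)
    rw [hCval, hx₀half]
    rw [show (1:ℝ) - 1/2 = 1/2 by norm_num, ← Real.log_mul (by norm_num) (by norm_num)]
    rw [← Real.log_inv]
    norm_num
end

section
/- Let X be a nonempty compact metric space, p_data a Borel probability measure on X, and D : X → ℝ a continuous function with 0 < D(x) < 1 for all x such that D(x) = 1/2 for every x in the support of p_data and D(x) ≤ 1/2 for every x ∈ X. Then a Borel probability measure p on X satisfies U(D, p) = −log 4 (equivalently, p attains the infimum of U(D, ·) over probability measures) if and only if p({x ∈ X : D(x) = 1/2}) = 1, i.e., p is supported in the contour set {D = 1/2}. -/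
open MeasureTheory

lemma compl_support_null' {X : Type*} [TopologicalSpace X] [SecondCountableTopology X]
    [MeasurableSpace X] (μ : Measure X) :
    μ {x | ∀ U : Set X, IsOpen U → x ∈ U → μ U ≠ 0}ᶜ = 0 := by
  have h : {x | ∀ U : Set X, IsOpen U → x ∈ U → μ U ≠ 0}ᶜ
      = ⋃₀ {U : Set X | IsOpen U ∧ μ U = 0} := by
    ext x
    simp only [Set.mem_compl_iff, Set.mem_setOf_eq, Set.mem_sUnion, not_forall]
    constructor
    · rintro ⟨U, hU, hx, hμ⟩
      exact ⟨U, ⟨hU, not_not.mp hμ⟩, hx⟩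
    · rintro ⟨U, ⟨hU, hμ⟩, hx⟩
      exact ⟨U, hU, hx, not_not.mpr hμ⟩
  obtain ⟨T, hTc, hTsub, hTeq⟩ := TopologicalSpace.isOpen_sUnion_countable
    {U : Set X | IsOpen U ∧ μ U = 0} (fun s hs => hs.1)
  rw [h, ← hTeq]
  exact (measure_sUnion_null_iff hTc).mpr fun s hs => (hTsub hs).2

/-- If the continuous discriminator `D : X → (0,1)` satisfies `D = 1/2` on the support of
`p_data` and `D ≤ 1/2` everywhere, then a Borel probability measure `p` satisfies
`U(D,p) = -log 4` iff `p` is supported in the contour set `{D = 1/2}`. -/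
theorem stmt_8 {X : Type*} [MetricSpace X] [CompactSpace X] [Nonempty X]
    [MeasurableSpace X] [BorelSpace X]
    (pdata : Measure X) [IsProbabilityMeasure pdata]
    (D : X → ℝ) (hD : Continuous D) (hD01 : ∀ x, 0 < D x ∧ D x < 1)
    (hsupp : ∀ x ∈ measureSupport pdata, D x = 1 / 2) (hle : ∀ x, D x ≤ 1 / 2)
    (p : Measure X) [IsProbabilityMeasure p] :
    ∫ x, Real.log (D x) ∂pdata + ∫ x, Real.log (1 - D x) ∂p = -Real.log 4 ↔
      p {x | D x = 1 / 2} = 1 := by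
  -- first integral
  have hae : ∀ᵐ x ∂pdata, Real.log (D x) = Real.log (1/2) := by
    have := compl_support_null' pdata
    filter_upwards [measure_eq_zero_iff_ae_notMem.mp this] with x hx
    rw [hsupp x (not_not.mp hx)]
  have hI1 : ∫ x, Real.log (D x) ∂pdata = -Real.log 2 := by
    rw [integral_congr_ae hae, integral_const, probReal_univ]
    simp [Real.log_div, Real.log_one]
  -- continuity / integrability of log (1 - D)
  have hpos : ∀ x, (0:ℝ) < 1 - D x := fun x => by have := (hD01 x).2; linarith
  have hcont : Continuous fun x => Real.log (1 - D x) :=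
    (continuous_const.sub hD).log (fun x => (hpos x).ne')
  have hint : Integrable (fun x => Real.log (1 - D x)) p := hcont.integrable_of_hasCompactSupport (HasCompactSupport.of_compactSpace _)
  have hlb : ∀ x, -Real.log 2 ≤ Real.log (1 - D x) := by
    intro x
    have : (1:ℝ)/2 ≤ 1 - D x := by have := hle x; linarith
    calc -Real.log 2 = Real.log (1/2) := by simp [Real.log_div]
      _ ≤ Real.log (1 - D x) := Real.log_le_log (by norm_num) this
  have hlog4 : Real.log 4 = Real.log 2 + Real.log 2 := by
    rw [show (4:ℝ) = 2 * 2 by norm_num, Real.log_mul two_ne_zero two_ne_zero]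
  have hmeas : MeasurableSet {x | D x = 1/2} := (isClosed_eq hD continuous_const).measurableSet
  constructor
  · intro h
    have hI2 : ∫ x, Real.log (1 - D x) ∂p = -Real.log 2 := by
      rw [hI1] at h; linarith
    have h0 : ∫ x, (Real.log (1 - D x) + Real.log 2) ∂p = 0 := by
      rw [integral_add hint (integrable_const _), hI2, integral_const, probReal_univ]
      simp
    have hnn : 0 ≤ᵐ[p] fun x => Real.log (1 - D x) + Real.log 2 :=
      Filter.Eventually.of_forall fun x => by simp only [Pi.zero_apply]; linarith [hlb x]
    have := (integral_eq_zero_iff_of_nonneg_ae hnn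
      (hint.add (integrable_const _))).mp h0
    have hae2 : ∀ᵐ x ∂p, D x = 1/2 := by
      filter_upwards [this] with x hx
      simp only [Pi.zero_apply] at hx
      have hlx : Real.log (1 - D x) = Real.log (1/2) := by
        have : Real.log (1/2) = -Real.log 2 := by simp [Real.log_div]
        linarith
      have := Real.log_injOn_pos (Set.mem_Ioi.mpr (hpos x))
        (Set.mem_Ioi.mpr (by norm_num : (0:ℝ) < 1/2)) hlx
      linarith
    have hc : p {x | D x = 1/2}ᶜ = 0 :=
      measure_eq_zero_iff_ae_notMem.mpr (by filter_upwards [hae2] with x hx; simpa using hx)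
    exact (prob_compl_eq_zero_iff hmeas).mp hc
  · intro h
    have hc : p {x | D x = 1/2}ᶜ = 0 := (prob_compl_eq_zero_iff hmeas).mpr h
    have hae2 : ∀ᵐ x ∂p, Real.log (1 - D x) = Real.log (1/2) := by
      filter_upwards [measure_eq_zero_iff_ae_notMem.mp hc] with x hx
      have : D x = 1/2 := by simpa using not_not.mp hx
      rw [this]; norm_num
    have hI2 : ∫ x, Real.log (1 - D x) ∂p = -Real.log 2 := by
      rw [integral_congr_ae hae2, integral_const, probReal_univ]
      simp [Real.log_div]
    rw [hI1, hI2, hlog4]; ring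
end

section
/- Let X be a nonempty finite type, f : ℝ → X → ℝ such that for each x ∈ X the map θ ↦ f(θ, x) is differentiable with derivative f'(θ, x), and let p_data be a probability mass function on X. Define J(θ) = Σ_{x∈X} p_data(x) log σ(f(θ, x)) + Σ_{x∈X} p_data(x) log(1 − σ(f(θ, x))), where σ is the logistic sigmoid. Then J'(θ) = Σ_{x∈X} p_data(x) (1 − 2σ(f(θ, x))) f'(θ, x); in particular, if σ(f(θ, x)) = 1/2 for every x with p_data(x) > 0, then J'(θ) = 0. -/
open Finset

/-- The logistic sigmoid `σ(t) = 1 / (1 + exp (-t))`. -/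
noncomputable def sigmoid (t : ℝ) : ℝ := 1 / (1 + Real.exp (-t))

lemma sigmoid_aux1 (u : ℝ → ℝ) (d θ : ℝ) (hu : HasDerivAt u d θ) :
    HasDerivAt (fun θ' => Real.log (sigmoid (u θ'))) ((1 - sigmoid (u θ)) * d) θ := by
  have hpos : ∀ t : ℝ, 0 < 1 + Real.exp (-t) := fun t => by positivity
  have heq : (fun θ' => Real.log (sigmoid (u θ')))
      = fun θ' => -Real.log (1 + Real.exp (-(u θ'))) := by
    funext θ'
    rw [sigmoid, Real.log_div one_ne_zero (ne_of_gt (hpos _))]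
    simp
  rw [heq]
  have h1 : HasDerivAt (fun θ' => 1 + Real.exp (-(u θ'))) (Real.exp (-(u θ)) * (-d)) θ := by
    simpa [mul_comm] using (hu.neg.exp).const_add 1
  have h2 := (h1.log (ne_of_gt (hpos _))).neg
  refine h2.congr_deriv ?_
  rw [sigmoid]
  have h := (hpos (u θ)).ne'
  try field_simp
  try ring

lemma sigmoid_aux2 (u : ℝ → ℝ) (d θ : ℝ) (hu : HasDerivAt u d θ) :
    HasDerivAt (fun θ' => Real.log (1 - sigmoid (u θ'))) (-(sigmoid (u θ)) * d) θ := by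
  have hpos : ∀ t : ℝ, 0 < 1 + Real.exp (-t) := fun t => by positivity
  have heq : (fun θ' => Real.log (1 - sigmoid (u θ')))
      = fun θ' => -(u θ') - Real.log (1 + Real.exp (-(u θ'))) := by
    funext θ'
    have h : 1 - sigmoid (u θ') = Real.exp (-(u θ')) / (1 + Real.exp (-(u θ'))) := by
      rw [sigmoid]
      field_simp
      ring
    rw [h, Real.log_div (Real.exp_pos _).ne' (ne_of_gt (hpos _)), Real.log_exp]
  rw [heq]
  have h1 : HasDerivAt (fun θ' => 1 + Real.exp (-(u θ'))) (Real.exp (-(u θ)) * (-d)) θ := by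
    simpa [mul_comm] using (hu.neg.exp).const_add 1
  have h2 := hu.neg.sub (h1.log (ne_of_gt (hpos _)))
  refine h2.congr_deriv ?_
  rw [sigmoid]
  have h := (hpos (u θ)).ne'
  try field_simp
  try ring

/-- When the contrastive distribution equals `p_data`, the binary adversarial training
objective `J(θ) = Σ_x p_data x * log (σ (f θ x)) + Σ_x p_data x * log (1 - σ (f θ x))`
has derivative `Σ_x p_data x * (1 - 2 σ (f θ x)) * f' θ x`; in particular the derivative
vanishes if `σ (f θ x) = 1/2` for every `x` in the support of `p_data`. -/
theorem stmt_13 {X : Type*} [Fintype X] [Nonempty X] (f f' : ℝ → X → ℝ)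
    (hf : ∀ x θ, HasDerivAt (fun θ' => f θ' x) (f' θ x) θ)
    (pdata : X → ℝ) (hp0 : ∀ x, 0 ≤ pdata x) (hp1 : ∑ x, pdata x = 1) (θ : ℝ) :
    HasDerivAt
      (fun θ' => (∑ x, pdata x * Real.log (sigmoid (f θ' x))) +
        ∑ x, pdata x * Real.log (1 - sigmoid (f θ' x)))
      (∑ x, pdata x * ((1 - 2 * sigmoid (f θ x)) * f' θ x)) θ ∧
      ((∀ x, 0 < pdata x → sigmoid (f θ x) = 1 / 2) →
        ∑ x, pdata x * ((1 - 2 * sigmoid (f θ x)) * f' θ x) = 0) := by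
  constructor
  · have h1 : HasDerivAt (fun θ' => ∑ x, pdata x * Real.log (sigmoid (f θ' x)))
        (∑ x, pdata x * ((1 - sigmoid (f θ x)) * f' θ x)) θ := by
      apply HasDerivAt.fun_sum
      intro x _
      exact (sigmoid_aux1 (fun θ' => f θ' x) (f' θ x) θ (hf x θ)).const_mul (pdata x)
    have h2 : HasDerivAt (fun θ' => ∑ x, pdata x * Real.log (1 - sigmoid (f θ' x)))
        (∑ x, pdata x * (-(sigmoid (f θ x)) * f' θ x)) θ := by
      apply HasDerivAt.fun_sum
      intro x _
      exact (sigmoid_aux2 (fun θ' => f θ' x) (f' θ x) θ (hf x θ)).const_mul (pdata x)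
    have h3 := h1.add h2
    refine h3.congr_deriv ?_
    rw [← Finset.sum_add_distrib]
    apply Finset.sum_congr rfl
    intro x _
    ring
  · intro h
    apply Finset.sum_eq_zero
    intro x _
    rcases (hp0 x).lt_or_eq with hx | hx
    · rw [h x hx]; ring
    · rw [← hx]; ring
end

section
/- Let X be a nonempty finite type and p, q : X → ℝ probability mass functions with p(x) > 0 and q(x) > 0 for all x. For every function D : X → ℝ with 0 < D(x) < 1 for all x, one has Σ_{x∈X} p(x) log D(x) + Σ_{x∈X} q(x) log(1 − D(x)) ≤ Σ_{x∈X} p(x) log(p(x)/(p(x)+q(x))) + Σ_{x∈X} q(x) log(q(x)/(p(x)+q(x))), with equality if and only if D(x) = p(x)/(p(x)+q(x)) for all x ∈ X. -/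
/-!
The objective splits into a sum over `x` of `a log t + b log (1 - t)` with `a = p x`, `b = q x`,
`t = D x`, so it suffices to maximise this on `(0, 1)`. With `t* = a / (a + b)`, the tangent-line
bound `log u ≤ log v + (u / v - 1)` at `v = t*` and at `v = 1 - t*` bounds it by its value at `t*`
plus `a (t / t* - 1) + b ((1 - t) / (1 - t*) - 1) = 0`; the bound for `log` is strict for
`u ≠ v`, which gives the equality case.
-/

open Finset Real

namespace Real

lemma log_le_log_add_div_sub_one {u v : ℝ} (hu : 0 < u) (hv : 0 < v) :
    log u ≤ log v + (u / v - 1) := by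
  have h := log_le_sub_one_of_pos (div_pos hu hv)
  rw [log_div hu.ne' hv.ne'] at h
  linarith

lemma log_lt_log_add_div_sub_one {u v : ℝ} (hu : 0 < u) (hv : 0 < v) (huv : u ≠ v) :
    log u < log v + (u / v - 1) := by
  have h := log_lt_sub_one_of_pos (div_pos hu hv) (by rwa [ne_eq, div_eq_one_iff_eq hv.ne'])
  rw [log_div hu.ne' hv.ne'] at h
  linarith

variable {a b t : ℝ}

lemma mul_log_add_mul_log_one_sub_lt (ha : 0 < a) (hb : 0 < b) (ht₀ : 0 < t) (ht₁ : t < 1)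
    (ht : t ≠ a / (a + b)) :
    a * log t + b * log (1 - t) < a * log (a / (a + b)) + b * log (b / (a + b)) := by
  have hA := mul_lt_mul_of_pos_left
    (log_lt_log_add_div_sub_one ht₀ (show 0 < a / (a + b) by positivity) ht) ha
  have hB := mul_le_mul_of_nonneg_left
    (log_le_log_add_div_sub_one (sub_pos.2 ht₁) (show 0 < b / (a + b) by positivity)) hb.le
  have hzero : a * (t / (a / (a + b)) - 1) + b * ((1 - t) / (b / (a + b)) - 1) = 0 := by
    field_simp
    ring
  linear_combination hA + hB + hzero

lemma one_sub_div_add_self_left (hab : a + b ≠ 0) : 1 - a / (a + b) = b / (a + b) := by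
  rw [one_sub_div hab, add_sub_cancel_left]

lemma mul_log_add_mul_log_one_sub_le (ha : 0 < a) (hb : 0 < b) (ht₀ : 0 < t) (ht₁ : t < 1) :
    a * log t + b * log (1 - t) ≤ a * log (a / (a + b)) + b * log (b / (a + b)) := by
  rcases eq_or_ne t (a / (a + b)) with rfl | ht
  · rw [one_sub_div_add_self_left (by positivity)]
  · exact (mul_log_add_mul_log_one_sub_lt ha hb ht₀ ht₁ ht).le

lemma mul_log_add_mul_log_one_sub_eq_iff (ha : 0 < a) (hb : 0 < b) (ht₀ : 0 < t) (ht₁ : t < 1) :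
    a * log t + b * log (1 - t) = a * log (a / (a + b)) + b * log (b / (a + b)) ↔
      t = a / (a + b) := by
  refine ⟨fun h => ?_, fun h => by rw [h, one_sub_div_add_self_left (by positivity)]⟩
  by_contra ht
  exact (mul_log_add_mul_log_one_sub_lt ha hb ht₀ ht₁ ht).ne h

end Real

theorem stmt_17_general {X : Type*} [Fintype X] (p q : X → ℝ)
    (hp : ∀ x, 0 < p x) (hq : ∀ x, 0 < q x)
    (D : X → ℝ) (hD : ∀ x, 0 < D x ∧ D x < 1) :
    ((∑ x, p x * Real.log (D x)) + ∑ x, q x * Real.log (1 - D x) ≤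
        (∑ x, p x * Real.log (p x / (p x + q x))) +
          ∑ x, q x * Real.log (q x / (p x + q x))) ∧
      ((∑ x, p x * Real.log (D x)) + ∑ x, q x * Real.log (1 - D x) =
          (∑ x, p x * Real.log (p x / (p x + q x))) +
            ∑ x, q x * Real.log (q x / (p x + q x)) ↔
        ∀ x, D x = p x / (p x + q x)) := by
  have hle : ∀ x ∈ univ, p x * log (D x) + q x * log (1 - D x) ≤
      p x * log (p x / (p x + q x)) + q x * log (q x / (p x + q x)) := fun x _ =>
    mul_log_add_mul_log_one_sub_le (hp x) (hq x) (hD x).1 (hD x).2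
  simp only [← sum_add_distrib]
  refine ⟨sum_le_sum hle, ?_⟩
  rw [sum_eq_sum_iff_of_le hle]
  simp only [mem_univ, forall_const]
  exact forall_congr' fun x => mul_log_add_mul_log_one_sub_eq_iff (hp x) (hq x) (hD x).1 (hD x).2

/-- Optimal discriminator for the GAN objective on a finite type: for strictly positive
probability mass functions `p, q` and any `D : X → (0,1)`,
`Σ_x p x * log (D x) + Σ_x q x * log (1 - D x)` is at most its value at
`D*(x) = p x / (p x + q x)`, with equality iff `D = D*`. -/
theorem stmt_17 {X : Type*} [Fintype X] [Nonempty X] (p q : X → ℝ)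
    (hp : ∀ x, 0 < p x) (hq : ∀ x, 0 < q x)
    (hp1 : ∑ x, p x = 1) (hq1 : ∑ x, q x = 1)
    (D : X → ℝ) (hD : ∀ x, 0 < D x ∧ D x < 1) :
    ((∑ x, p x * Real.log (D x)) + ∑ x, q x * Real.log (1 - D x) ≤
        (∑ x, p x * Real.log (p x / (p x + q x))) +
          ∑ x, q x * Real.log (q x / (p x + q x))) ∧
      ((∑ x, p x * Real.log (D x)) + ∑ x, q x * Real.log (1 - D x) =
          (∑ x, p x * Real.log (p x / (p x + q x))) +
            ∑ x, q x * Real.log (q x / (p x + q x)) ↔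
        ∀ x, D x = p x / (p x + q x)) :=
  stmt_17_general p q hp hq D hD
end

section
/- Let X be a nonempty finite type and p, q : X → ℝ probability mass functions with p(x) > 0 and q(x) > 0 for all x. Then Σ_{x∈X} p(x) log(p(x)/(p(x)+q(x))) + Σ_{x∈X} q(x) log(q(x)/(p(x)+q(x))) ≥ −log 4, with equality if and only if p = q. -/
open Finset

private lemma gibbs_le {X : Type*} [Fintype X] (p f : X → ℝ)
    (hp : ∀ x, 0 < p x) (hf : ∀ x, 0 < f x) :
    ∑ x, p x * Real.log (f x / p x) ≤ ∑ x, (f x - p x) := by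
  apply Finset.sum_le_sum
  intro x _
  have h := Real.log_le_sub_one_of_pos (div_pos (hf x) (hp x))
  have hpx := hp x
  calc p x * Real.log (f x / p x) ≤ p x * (f x / p x - 1) := by nlinarith
    _ = f x - p x := by field_simp

private lemma gibbs_lt {X : Type*} [Fintype X] (p f : X → ℝ)
    (hp : ∀ x, 0 < p x) (hf : ∀ x, 0 < f x) (x0 : X) (hx0 : f x0 / p x0 ≠ 1) :
    ∑ x, p x * Real.log (f x / p x) < ∑ x, (f x - p x) := by
  apply Finset.sum_lt_sum
  · intro x _
    have h := Real.log_le_sub_one_of_pos (div_pos (hf x) (hp x))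
    have hpx := hp x
    calc p x * Real.log (f x / p x) ≤ p x * (f x / p x - 1) := by nlinarith
      _ = f x - p x := by field_simp
  · refine ⟨x0, Finset.mem_univ _, ?_⟩
    have h := Real.log_lt_sub_one_of_pos (div_pos (hf x0) (hp x0)) hx0
    have hpx := hp x0
    calc p x0 * Real.log (f x0 / p x0) < p x0 * (f x0 / p x0 - 1) := by nlinarith
      _ = f x0 - p x0 := by field_simp

/-- The GAN payoff at the optimal discriminator is at least `-log 4`, with equality iff
the generator distribution matches the data distribution: for strictly positive
probability mass functions `p, q` on a nonempty finite type,
`Σ_x p x * log (p x / (p x + q x)) + Σ_x q x * log (q x / (p x + q x)) ≥ -log 4`,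
with equality iff `p = q`. -/
theorem stmt_18 {X : Type*} [Fintype X] [Nonempty X] (p q : X → ℝ)
    (hp : ∀ x, 0 < p x) (hq : ∀ x, 0 < q x)
    (hp1 : ∑ x, p x = 1) (hq1 : ∑ x, q x = 1) :
    (-Real.log 4 ≤
        (∑ x, p x * Real.log (p x / (p x + q x))) +
          ∑ x, q x * Real.log (q x / (p x + q x))) ∧
      ((∑ x, p x * Real.log (p x / (p x + q x))) +
          ∑ x, q x * Real.log (q x / (p x + q x)) = -Real.log 4 ↔ p = q) := by
  set m : X → ℝ := fun x => (p x + q x) / 2 with hm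
  have hm0 : ∀ x, 0 < m x := fun x => by have := hp x; have := hq x; positivity
  have hmsum : ∑ x, m x = 1 := by
    simp only [hm]
    rw [← Finset.sum_div, Finset.sum_add_distrib, hp1, hq1]
    norm_num
  have key : ∀ (r : X → ℝ), (∀ x, 0 < r x) → (∑ x, r x = 1) →
      ∑ x, r x * Real.log (r x / (p x + q x)) =
      -(∑ x, r x * Real.log (m x / r x)) - Real.log 2 := by
    intro r hr hr1
    have : ∀ x, r x * Real.log (r x / (p x + q x)) =
        -(r x * Real.log (m x / r x)) - r x * Real.log 2 := by
      intro x
      have hmx := hm0 x; have hrx := hr x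
      have h2 : m x * 2 = p x + q x := by simp [hm]
      have h1 : r x / (p x + q x) = r x / m x / 2 := by rw [div_div, h2]
      rw [h1, Real.log_div (by positivity) (by norm_num), ← inv_div, Real.log_inv]
      ring
    rw [Finset.sum_congr rfl fun x _ => this x, Finset.sum_sub_distrib, Finset.sum_neg_distrib,
      ← Finset.sum_mul, hr1, one_mul]
  have hP := key p hp hp1
  have hQ := key q hq hq1
  have hlog4 : Real.log 4 = Real.log 2 + Real.log 2 := by
    rw [← Real.log_mul (by norm_num) (by norm_num)]; norm_num
  set S := ∑ x, p x * Real.log (m x / p x) with hS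
  set T := ∑ x, q x * Real.log (m x / q x) with hT
  have hSle : S ≤ 0 := by
    have := gibbs_le p m hp hm0
    rwa [Finset.sum_sub_distrib, hmsum, hp1, sub_self] at this
  have hTle : T ≤ 0 := by
    have := gibbs_le q m hq hm0
    rwa [Finset.sum_sub_distrib, hmsum, hq1, sub_self] at this
  have hEq : (∑ x, p x * Real.log (p x / (p x + q x))) +
      ∑ x, q x * Real.log (q x / (p x + q x)) = -(S + T) - Real.log 4 := by
    rw [hP, hQ, hlog4]; ring
  constructor
  · rw [hEq]; linarith
  · rw [hEq]
    constructor
    · intro h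
      by_contra hne
      obtain ⟨x0, hx0⟩ : ∃ x0, p x0 ≠ q x0 := by
        by_contra hc
        push_neg at hc
        exact hne (funext hc)
      have hlt : S < 0 := by
        have hne1 : m x0 / p x0 ≠ 1 := by
          have h1 := hp x0; have h2 := hq x0
          intro hcon
          apply hx0
          rw [div_eq_one_iff_eq (by positivity)] at hcon
          simp only [hm] at hcon
          linarith
        have := gibbs_lt p m hp hm0 x0 hne1
        rwa [Finset.sum_sub_distrib, hmsum, hp1, sub_self] at this
      linarith [h]
    · intro h
      subst h
      have : S = 0 ∧ T = 0 := by
        constructor <;>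
        · simp only [hS, hT, hm]
          apply Finset.sum_eq_zero
          intro x _
          have := hp x
          have h2 : (p x + p x) / 2 = p x := by ring
          rw [h2, div_self (by positivity), Real.log_one, mul_zero]
      rw [this.1, this.2]
      ring
end
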